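/- arXiv:2311.06875 — 4 statements merged into one kernel-verified Lean document; each statement's English description precedes it below -/
import Mathlib

section
/- For every t ≥ 4, the graph G⁺ obtained from the star K_{1,t} by adding one edge between two leaves a, b has positive modularity. In fact, the bipartition A = {{a,b}, V∖{a,b}} satisfies (t+1)²·q_A(G⁺) = 2t − 6 > 0. -/
open Finset
open scoped Classical

noncomputable def vol {V : Type*} [Fintype V] (G : SimpleGraph V) (U : Finset V) : ℕ :=
  ∑ v ∈ U, G.degree v

noncomputable def numEdges {V : Type*} [Fintype V] (G : SimpleGraph V) : ℕ :=
  G.edgeFinset.card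

noncomputable def edgesIn {V : Type*} [Fintype V] (G : SimpleGraph V) (U : Finset V) : ℕ :=
  (G.edgeFinset.filter (fun e => ∀ v ∈ e, v ∈ U)).card

noncomputable def edgesBetween {V : Type*} [Fintype V] (G : SimpleGraph V) (A B : Finset V) : ℕ :=
  (G.edgeFinset.filter (fun e => ∃ a ∈ A, ∃ b ∈ B, e = s(a, b))).card

/-- modularity score of the bipartition `{A, Aᶜ}`. -/
noncomputable def bipScore {V : Type*} [Fintype V] (G : SimpleGraph V) (A : Finset V) : ℝ :=
  ((edgesIn G A : ℝ) + (edgesIn G Aᶜ : ℝ)) / (numEdges G : ℝ)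
    - ((vol G A : ℝ) ^ 2 + (vol G Aᶜ : ℝ) ^ 2) / (4 * (numEdges G : ℝ) ^ 2)

/-- modularity score of a vertex partition. -/
noncomputable def modScore {V : Type*} [Fintype V] (G : SimpleGraph V)
    (P : Finpartition (univ : Finset V)) : ℝ :=
  (∑ A ∈ P.parts, (edgesIn G A : ℝ)) / (numEdges G : ℝ)
    - (∑ A ∈ P.parts, (vol G A : ℝ) ^ 2) / (4 * (numEdges G : ℝ) ^ 2)

/-- the modularity `q*(G)`: the maximum modularity score over all vertex partitions. -/
noncomputable def modularity {V : Type*} [Fintype V] (G : SimpleGraph V) : ℝ :=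
  ⨆ P : Finpartition (univ : Finset V), modScore G P

lemma sum_edgesIn_le {V : Type*} [Fintype V] (G : SimpleGraph V)
    (P : Finpartition (univ : Finset V)) : ∑ A ∈ P.parts, edgesIn G A ≤ numEdges G := by
  classical
  unfold edgesIn numEdges
  rw [← Finset.card_biUnion]
  · exact Finset.card_le_card (Finset.biUnion_subset.mpr fun A _ => Finset.filter_subset _ _)
  · intro A hA B hB hne
    rw [Function.onFun, Finset.disjoint_left]
    intro e heA heB
    simp only [Finset.mem_filter] at heA heB
    have hx := Sym2.out_fst_mem e
    have h1 : (Quot.out e).1 ∈ A := heA.2 _ hx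
    have h2 : (Quot.out e).1 ∈ B := heB.2 _ hx
    have hd := P.disjoint hA hB (by exact_mod_cast hne)
    exact (Finset.disjoint_left.mp hd) h1 h2

lemma modScore_le_one {V : Type*} [Fintype V] (G : SimpleGraph V)
    (P : Finpartition (univ : Finset V)) : modScore G P ≤ 1 := by
  unfold modScore
  have h2 : (0:ℝ) ≤ (∑ A ∈ P.parts, (vol G A : ℝ) ^ 2) / (4 * (numEdges G : ℝ) ^ 2) := by
    apply div_nonneg
    · exact Finset.sum_nonneg fun _ _ => sq_nonneg _
    · positivity
  have h1 : (∑ A ∈ P.parts, (edgesIn G A : ℝ)) / (numEdges G : ℝ) ≤ 1 := by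
    rcases eq_or_ne (numEdges G) 0 with h | h
    · simp [h]
    · rw [div_le_one (by exact_mod_cast Nat.pos_of_ne_zero h)]
      exact_mod_cast (Nat.cast_le.mpr (sum_edgesIn_le G P) : ((∑ A ∈ P.parts, edgesIn G A : ℕ) : ℝ) ≤ _)
  linarith

lemma modularity_pos {V : Type*} [Fintype V] (G : SimpleGraph V)
    (P : Finpartition (univ : Finset V)) (hP : 0 < modScore G P) : 0 < modularity G := by
  have hb : BddAbove (Set.range fun Q : Finpartition (univ : Finset V) => modScore G Q) :=
    ⟨1, by rintro x ⟨Q, rfl⟩; exact modScore_le_one G Q⟩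
  calc (0:ℝ) < modScore G P := hP
    _ ≤ modularity G := le_ciSup hb P

lemma key {V : Type*} [Fintype V] (t : ℕ) (ht : 4 ≤ t) (hcard : Fintype.card V = t + 1)
    (z a b : V) (ha : a ≠ z) (hb : b ≠ z) (hab : a ≠ b) (G : SimpleGraph V)
    (hG : ∀ u v, G.Adj u v ↔ u ≠ v ∧ (u = z ∨ v = z ∨ s(u, v) = s(a, b)))
    (A : Finset V) (hA : ∀ x, x ∈ A ↔ x = a ∨ x = b) :
    ((t : ℝ) + 1) ^ 2 * bipScore G A = 2 * t - 6 ∧ 0 < modularity G := by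
  have haA : a ∈ A := (hA a).mpr (Or.inl rfl)
  have hbA : b ∈ A := (hA b).mpr (Or.inr rfl)
  have h0A : z ∉ A := by
    intro h
    rcases (hA z).mp h with rfl | rfl
    exacts [ha rfl, hb rfl]
  have hAeq : A = {a, b} := by
    ext x
    rw [hA x]
    simp
  -- degrees
  have hdeg0 : G.degree z = t := by
    rw [← SimpleGraph.card_neighborFinset_eq_degree]
    have : G.neighborFinset z = Finset.univ.erase z := by
      ext v
      simp only [SimpleGraph.mem_neighborFinset, hG, Finset.mem_erase, Finset.mem_univ, and_true]
      constructor
      · rintro ⟨h, -⟩; exact fun hv => h hv.symm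
      · intro h; exact ⟨fun hv => h hv.symm, by simp⟩
    rw [this, Finset.card_erase_of_mem (Finset.mem_univ _), Finset.card_univ, hcard]
    omega
  have hdega : G.degree a = 2 := by
    rw [← SimpleGraph.card_neighborFinset_eq_degree]
    have : G.neighborFinset a = {z, b} := by
      ext v
      simp only [SimpleGraph.mem_neighborFinset, hG, Finset.mem_insert, Finset.mem_singleton]
      constructor
      · rintro ⟨hne, h0 | h0 | h0⟩
        · exact absurd h0 ha
        · exact Or.inl h0
        · rcases Sym2.eq_iff.mp h0 with ⟨-, hv⟩ | ⟨hab', -⟩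
          · exact Or.inr hv
          · exact absurd hab' hab
      · rintro (rfl | rfl)
        · exact ⟨ha, Or.inr (Or.inl rfl)⟩
        · exact ⟨hab, Or.inr (Or.inr rfl)⟩
    rw [this, Finset.card_insert_of_notMem (by simpa using hb.symm), Finset.card_singleton]
  have hdegb : G.degree b = 2 := by
    rw [← SimpleGraph.card_neighborFinset_eq_degree]
    have : G.neighborFinset b = {z, a} := by
      ext v
      simp only [SimpleGraph.mem_neighborFinset, hG, Finset.mem_insert, Finset.mem_singleton]
      constructor
      · rintro ⟨hne, h0 | h0 | h0⟩
        · exact absurd h0 hb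
        · exact Or.inl h0
        · rcases Sym2.eq_iff.mp h0 with ⟨hba, -⟩ | ⟨-, hv⟩
          · exact absurd hba.symm hab
          · exact Or.inr hv
      · rintro (rfl | rfl)
        · exact ⟨hb, Or.inr (Or.inl rfl)⟩
        · exact ⟨hab.symm, Or.inr (Or.inr Sym2.eq_swap)⟩
    rw [this, Finset.card_insert_of_notMem (by simpa using ha.symm), Finset.card_singleton]
  have hdegv : ∀ v : V, v ≠ z → v ≠ a → v ≠ b → G.degree v = 1 := by
    intro v hv0 hva hvb
    rw [← SimpleGraph.card_neighborFinset_eq_degree]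
    have : G.neighborFinset v = {z} := by
      ext u
      simp only [SimpleGraph.mem_neighborFinset, hG, Finset.mem_singleton]
      constructor
      · rintro ⟨hne, h0 | h0 | h0⟩
        · exact absurd h0 hv0
        · exact h0
        · rcases Sym2.eq_iff.mp h0 with ⟨hva', -⟩ | ⟨hvb', -⟩
          · exact absurd hva' hva
          · exact absurd hvb' hvb
      · rintro rfl
        exact ⟨hv0, Or.inr (Or.inl rfl)⟩
    rw [this, Finset.card_singleton]
  -- total degree sum
  have hsub : ({z, a, b} : Finset V) ⊆ Finset.univ := Finset.subset_univ _
  have hcard3 : ({z, a, b} : Finset V).card = 3 := by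
    rw [Finset.card_insert_of_notMem (by simp [ha.symm, hb.symm]),
      Finset.card_insert_of_notMem (by simpa using hab), Finset.card_singleton]
  have hsumdeg : ∑ v : V, G.degree v = 2 * t + 2 := by
    rw [← Finset.sum_sdiff hsub]
    have h1 : ∑ v ∈ ({z, a, b} : Finset V), G.degree v = t + 4 := by
      rw [Finset.sum_insert (by simp [ha.symm, hb.symm]),
        Finset.sum_insert (by simpa using hab), Finset.sum_singleton, hdeg0, hdega, hdegb]
    have hall : ∀ v ∈ Finset.univ \ ({z, a, b} : Finset V), G.degree v = 1 := by
      intro v hv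
      simp only [Finset.mem_sdiff, Finset.mem_univ, true_and, Finset.mem_insert,
        Finset.mem_singleton, not_or] at hv
      exact hdegv v hv.1 hv.2.1 hv.2.2
    have h2 : ∑ v ∈ (Finset.univ \ ({z, a, b} : Finset V)), G.degree v = t - 2 := by
      rw [Finset.sum_congr rfl hall, Finset.sum_const, smul_eq_mul, mul_one,
        Finset.card_sdiff_of_subset hsub, Finset.card_univ, hcard, hcard3]
      omega
    rw [h1, h2]
    omega
  have hm : numEdges G = t + 1 := by
    have := SimpleGraph.sum_degrees_eq_twice_card_edges G
    rw [hsumdeg] at this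
    unfold numEdges
    omega
  -- edgesIn A = 1
  have heA : edgesIn G A = 1 := by
    unfold edgesIn
    have hfil : G.edgeFinset.filter (fun e => ∀ v ∈ e, v ∈ A) = {s(a, b)} := by
      ext e
      induction e using Sym2.ind with
      | _ u v =>
        simp only [Finset.mem_filter, SimpleGraph.mem_edgeFinset, SimpleGraph.mem_edgeSet,
          Finset.mem_singleton]
        constructor
        · rintro ⟨hadj, hall⟩
          have hu := (hA u).mp (hall u (Sym2.mem_mk_left _ _))
          have hv := (hA v).mp (hall v (Sym2.mem_mk_right _ _))
          have hne := ((hG u v).mp hadj).1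
          rcases hu with rfl | rfl <;> rcases hv with rfl | rfl
          · exact absurd rfl hne
          · rfl
          · exact Sym2.eq_swap
          · exact absurd rfl hne
        · intro h
          rcases Sym2.eq_iff.mp h with ⟨rfl, rfl⟩ | ⟨rfl, rfl⟩
          · refine ⟨(hG u v).mpr ⟨hab, Or.inr (Or.inr rfl)⟩, ?_⟩
            intro w hw
            rcases Sym2.mem_iff.mp hw with rfl | rfl
            exacts [haA, hbA]
          · refine ⟨(hG u v).mpr ⟨hab.symm, Or.inr (Or.inr Sym2.eq_swap)⟩, ?_⟩
            intro w hw
            rcases Sym2.mem_iff.mp hw with rfl | rfl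
            exacts [hbA, haA]
    rw [hfil, Finset.card_singleton]
  -- edgesIn Aᶜ = t - 2
  have heAc : edgesIn G Aᶜ = t - 2 := by
    unfold edgesIn
    have himg : G.edgeFinset.filter (fun e => ∀ v ∈ e, v ∈ Aᶜ)
        = (Finset.univ \ ({z, a, b} : Finset V)).image (fun v => s(z, v)) := by
      ext e
      induction e using Sym2.ind with
      | _ u v =>
        simp only [Finset.mem_filter, SimpleGraph.mem_edgeFinset, SimpleGraph.mem_edgeSet,
          Finset.mem_image, Finset.mem_sdiff, Finset.mem_univ, true_and, Finset.mem_insert,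
          Finset.mem_singleton, not_or, Finset.mem_compl]
        constructor
        · rintro ⟨hadj, hall⟩
          have hu : u ∉ A := hall u (Sym2.mem_mk_left _ _)
          have hv : v ∉ A := hall v (Sym2.mem_mk_right _ _)
          have hu2 : ¬(u = a ∨ u = b) := fun h => hu ((hA u).mpr h)
          have hv2 : ¬(v = a ∨ v = b) := fun h => hv ((hA v).mpr h)
          push_neg at hu2 hv2
          obtain ⟨hne, h0 | h0 | h0⟩ := (hG u v).mp hadj
          · subst h0
            exact ⟨v, ⟨fun h => hne h.symm, hv2.1, hv2.2⟩, rfl⟩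
          · subst h0
            exact ⟨u, ⟨hne, hu2.1, hu2.2⟩, Sym2.eq_swap⟩
          · rcases Sym2.eq_iff.mp h0 with ⟨h1, -⟩ | ⟨h1, -⟩
            · exact absurd h1 hu2.1
            · exact absurd h1 hu2.2
        · rintro ⟨w, ⟨hw0, hwa, hwb⟩, hw⟩
          constructor
          · rw [← SimpleGraph.mem_edgeSet, ← hw, SimpleGraph.mem_edgeSet]
            exact (hG z w).mpr ⟨fun h => hw0 h.symm, Or.inl rfl⟩
          · intro x hx
            rw [← hw] at hx
            rw [hA x]
            rcases Sym2.mem_iff.mp hx with rfl | rfl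
            · rintro (h | h)
              exacts [ha h.symm, hb h.symm]
            · rintro (h | h)
              exacts [hwa h, hwb h]
    rw [himg, Finset.card_image_of_injOn, Finset.card_sdiff_of_subset hsub, Finset.card_univ,
      hcard, hcard3]
    · omega
    intro x hx y hy hxy
    simp only [Finset.coe_sdiff, Finset.coe_univ, Set.mem_diff, Finset.mem_coe, Set.mem_univ,
      true_and, Finset.mem_insert, Finset.mem_singleton, not_or] at hx hy
    rcases Sym2.eq_iff.mp hxy with ⟨-, h⟩ | ⟨h, h'⟩
    · exact h
    · exact absurd h' hx.1
  -- volumes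
  have hvolA : vol G A = 4 := by
    unfold vol
    rw [hAeq, Finset.sum_pair hab, hdega, hdegb]
  have hvolAc : vol G Aᶜ = 2 * t - 2 := by
    have hsplit := Finset.sum_add_sum_compl A (fun v => G.degree v)
    rw [hsumdeg] at hsplit
    have h4 : ∑ v ∈ A, G.degree v = 4 := hvolA
    unfold vol
    omega
  -- the score computation
  have hscore : ((t : ℝ) + 1) ^ 2 * bipScore G A = 2 * t - 6 := by
    unfold bipScore
    rw [heA, heAc, hvolA, hvolAc, hm]
    have h2 : ((t - 2 : ℕ) : ℝ) = (t : ℝ) - 2 := by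
      rw [Nat.cast_sub (by omega)]; norm_num
    have h3 : ((2 * t - 2 : ℕ) : ℝ) = 2 * (t : ℝ) - 2 := by
      rw [Nat.cast_sub (by omega)]; push_cast; ring
    rw [h2, h3]
    have ht1 : ((t : ℝ) + 1) ≠ 0 := by positivity
    push_cast
    field_simp
    ring
  refine ⟨hscore, ?_⟩
  -- positivity of bipScore
  have hbip : 0 < bipScore G A := by
    have h1 : (0:ℝ) < ((t : ℝ) + 1) ^ 2 := by positivity
    have h2 : (0:ℝ) < 2 * (t : ℝ) - 6 := by
      have : (4:ℝ) ≤ (t : ℝ) := by exact_mod_cast ht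
      linarith
    nlinarith [hscore]
  -- build the bipartition
  have hAne : A ≠ Aᶜ := by
    intro h
    have : a ∈ Aᶜ := h ▸ haA
    exact (Finset.mem_compl.mp this) haA
  have hP : ∃ P : Finpartition (univ : Finset V), P.parts = {A, Aᶜ} := by
    refine ⟨⟨{A, Aᶜ}, ?_, ?_, ?_⟩, rfl⟩
    · rw [Finset.supIndep_pair hAne]
      exact disjoint_compl_right
    · rw [Finset.sup_insert, Finset.sup_singleton]
      simp [Finset.sup_eq_union]
    · simp only [Finset.mem_insert, Finset.mem_singleton, not_or, Finset.bot_eq_empty]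
      constructor
      · intro h
        exact absurd haA (by rw [← h]; exact Finset.notMem_empty a)
      · intro h
        have hz : z ∈ Aᶜ := Finset.mem_compl.mpr h0A
        exact absurd hz (by rw [← h]; exact Finset.notMem_empty z)
  obtain ⟨P, hPparts⟩ := hP
  have hmod : modScore G P = bipScore G A := by
    unfold modScore bipScore
    rw [hPparts, Finset.sum_pair hAne, Finset.sum_pair hAne]
  exact modularity_pos G P (hmod ▸ hbip)

theorem stmt13 (t : ℕ) (ht : 4 ≤ t) (a b : Fin (t + 1)) (ha : a ≠ 0) (hb : b ≠ 0)
    (hab : a ≠ b) (G : SimpleGraph (Fin (t + 1)))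
    (hG : ∀ u v, G.Adj u v ↔ u ≠ v ∧ (u = 0 ∨ v = 0 ∨ s(u, v) = s(a, b))) :
    ((t : ℝ) + 1) ^ 2 * bipScore G {a, b} = 2 * t - 6 ∧ 0 < modularity G :=
  key t ht (by simp) 0 a b ha hb hab G hG {a, b} (fun x => by simp)
end

section
/- For any graph G obtained by adding one edge to the complete tripartite graph K_{1,3,3}, we have q*(G) = 0; hence δ⁺(K_{1,3,3}) ≥ 2. -/
open Finset
open scoped Classical

/-- part assignment for the complete tripartite graph `K_{1,3,3}` on `Fin 7`:
part `{0}`, part `{1,2,3}` and part `{4,5,6}`. -/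
def part133 : Fin 7 → Fin 3 := fun i => if i.val = 0 then 0 else if i.val ≤ 3 then 1 else 2


def adjB (a b u v : Fin 7) : Prop :=
  u ≠ v ∧ (part133 u ≠ part133 v ∨ (u = a ∧ v = b) ∨ (u = b ∧ v = a))

instance : ∀ a b u v, Decidable (adjB a b u v) := fun a b u v => by unfold adjB; infer_instance

set_option maxRecDepth 10000 in
lemma key_s15 : ∀ a b : Fin 7, a ≠ b → part133 a = part133 b →
    (∑ u : Fin 7, ∑ v : Fin 7, if adjB a b u v then 1 else 0) = 32 ∧
    ∀ A : Finset (Fin 7),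
      32 * (∑ u ∈ A, ∑ v ∈ A, if adjB a b u v then 1 else 0) ≤
        (∑ u ∈ A, ∑ v : Fin 7, if adjB a b u v then 1 else 0) ^ 2 := by decide

lemma deg_eq {V : Type*} [Fintype V] (G : SimpleGraph V) (u : V) :
    G.degree u = ∑ v : V, if G.Adj u v then 1 else 0 := by
  classical
  have h := SimpleGraph.degree_eq_sum_if_adj (R := ℕ) (G := G) u
  simpa using h

section Bridge
variable {V : Type*} [Fintype V] (G : SimpleGraph V) (A : Finset V)

/-- restriction of G to A, as a graph on V -/
def rGraph : SimpleGraph V where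
  Adj u v := G.Adj u v ∧ u ∈ A ∧ v ∈ A
  symm := ⟨fun u v ⟨h1, h2, h3⟩ => ⟨h1.symm, h3, h2⟩⟩
  loopless := ⟨fun v h => G.loopless.irrefl v h.1⟩

lemma edgesIn_eq_rGraph : edgesIn G A = (rGraph G A).edgeFinset.card := by
  unfold edgesIn
  congr 1
  ext e
  induction e with
  | _ x y =>
    simp only [mem_filter, SimpleGraph.mem_edgeFinset, SimpleGraph.mem_edgeSet, Sym2.mem_iff]
    simp only [rGraph]
    constructor
    · rintro ⟨h, hA⟩
      exact ⟨h, hA x (Or.inl rfl), hA y (Or.inr rfl)⟩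
    · rintro ⟨h1, h2, h3⟩
      refine ⟨h1, ?_⟩
      rintro v (rfl | rfl) <;> assumption

lemma two_mul_edgesIn : 2 * edgesIn G A = ∑ u ∈ A, ∑ v ∈ A, if G.Adj u v then 1 else 0 := by
  rw [edgesIn_eq_rGraph, ← SimpleGraph.sum_degrees_eq_twice_card_edges]
  have hdeg : ∀ u, (rGraph G A).degree u = ∑ v : V, if (rGraph G A).Adj u v then 1 else 0 :=
    fun u => deg_eq (rGraph G A) u
  calc ∑ u, (rGraph G A).degree u
      = ∑ u : V, ∑ v : V, if G.Adj u v ∧ u ∈ A ∧ v ∈ A then (1:ℕ) else 0 := by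
        refine Finset.sum_congr rfl fun u _ => ?_
        rw [hdeg u]
        exact Finset.sum_congr rfl fun v _ => if_congr Iff.rfl rfl rfl
    _ = ∑ u ∈ A, ∑ v : V, if G.Adj u v ∧ v ∈ A then (1:ℕ) else 0 := by
        rw [← Finset.univ_inter A, ← Finset.sum_ite_mem]
        refine Finset.sum_congr rfl fun u _ => ?_
        by_cases hu : u ∈ A <;> simp [hu]
    _ = ∑ u ∈ A, ∑ v ∈ A, if G.Adj u v then (1:ℕ) else 0 := by
        refine Finset.sum_congr rfl fun u _ => ?_
        rw [← Finset.univ_inter A, ← Finset.sum_ite_mem]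
        refine Finset.sum_congr rfl fun v _ => ?_
        by_cases hv : v ∈ A <;> simp [hv]

lemma vol_eq_sum : vol G A = ∑ u ∈ A, ∑ v : V, if G.Adj u v then 1 else 0 :=
  Finset.sum_congr rfl fun u _ => deg_eq G u

end Bridge


lemma vol_univ {W : Type*} [Fintype W] (G : SimpleGraph W) :
    vol G univ = 2 * numEdges G :=
  SimpleGraph.sum_degrees_eq_twice_card_edges G

lemma edgesIn_univ {W : Type*} [Fintype W] (G : SimpleGraph W) :
    edgesIn G univ = numEdges G := by
  unfold edgesIn numEdges
  congr 1
  apply Finset.filter_true_of_mem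
  intro e _ v _
  exact Finset.mem_univ v

lemma modularity_eq_zero {W : Type*} [Fintype W] [Nonempty W] (G : SimpleGraph W)
    (hm : numEdges G ≠ 0)
    (hp : ∀ A : Finset W, 4 * numEdges G * edgesIn G A ≤ (vol G A) ^ 2) :
    modularity G = 0 := by
  have hmR : (0 : ℝ) < (numEdges G : ℝ) := by
    have : 0 < numEdges G := Nat.pos_of_ne_zero hm
    exact_mod_cast this
  have hbound : ∀ P : Finpartition (univ : Finset W), modScore G P ≤ 0 := by
    intro P
    have hsumN : 4 * numEdges G * ∑ A ∈ P.parts, edgesIn G A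
        ≤ ∑ A ∈ P.parts, (vol G A) ^ 2 := by
      rw [Finset.mul_sum]
      exact Finset.sum_le_sum fun A _ => hp A
    have hcast : 4 * (numEdges G : ℝ) * ∑ A ∈ P.parts, (edgesIn G A : ℝ)
        ≤ ∑ A ∈ P.parts, (vol G A : ℝ) ^ 2 := by exact_mod_cast hsumN
    unfold modScore
    rw [sub_nonpos, div_le_div_iff₀ hmR (by positivity)]
    nlinarith [hcast, hmR]
  have hzero : modScore G (Finpartition.indiscrete (Finset.univ_nonempty.ne_empty)) = 0 := by
    unfold modScore
    rw [Finpartition.indiscrete_parts, Finset.sum_singleton, Finset.sum_singleton,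
      edgesIn_univ, vol_univ]
    push_cast
    field_simp
    ring
  refine le_antisymm (Real.iSup_nonpos hbound) ?_
  have hb : BddAbove (Set.range fun P => modScore G P) :=
    ⟨0, by rintro x ⟨P, rfl⟩; exact hbound P⟩
  have hle := le_ciSup hb (Finpartition.indiscrete (Finset.univ_nonempty.ne_empty))
  rw [hzero] at hle
  exact hle

theorem stmt15 (G G' : SimpleGraph (Fin 7))
    (hG : ∀ u v, G.Adj u v ↔ part133 u ≠ part133 v)
    (a b : Fin 7) (hab : a ≠ b) (hnadj : ¬ G.Adj a b)
    (hG' : ∀ u v, G'.Adj u v ↔ G.Adj u v ∨ s(u, v) = s(a, b)) :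
    modularity G' = 0 := by
  have hpp : part133 a = part133 b := by
    by_contra h; exact hnadj ((hG a b).2 h)
  have hadj : ∀ u v, G'.Adj u v ↔ adjB a b u v := by
    intro u v
    constructor
    · intro h
      refine ⟨h.ne, ?_⟩
      rcases (hG' u v).1 h with h' | h'
      · exact Or.inl ((hG u v).1 h')
      · exact Or.inr (Sym2.eq_iff.1 h')
    · rintro ⟨hne, h | h⟩
      · exact (hG' u v).2 (Or.inl ((hG u v).2 h))
      · exact (hG' u v).2 (Or.inr (Sym2.eq_iff.2 h))
  obtain ⟨hsum32, hineq⟩ := key_s15 a b hab hpp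
  have hvol : ∀ A : Finset (Fin 7),
      vol G' A = ∑ u ∈ A, ∑ v : Fin 7, if adjB a b u v then 1 else 0 := by
    intro A
    rw [vol_eq_sum]
    exact Finset.sum_congr rfl fun u _ =>
      Finset.sum_congr rfl fun v _ => if_congr (hadj u v) rfl rfl
  have hE : ∀ A : Finset (Fin 7),
      2 * edgesIn G' A = ∑ u ∈ A, ∑ v ∈ A, if adjB a b u v then 1 else 0 := by
    intro A
    rw [two_mul_edgesIn]
    exact Finset.sum_congr rfl fun u _ =>
      Finset.sum_congr rfl fun v _ => if_congr (hadj u v) rfl rfl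
  have hvoluniv : vol G' univ = 32 := by rw [hvol]; exact hsum32
  have hnum : numEdges G' = 16 := by
    have h2 := vol_univ G'
    omega
  refine modularity_eq_zero G' (by omega) ?_
  intro A
  have h := hineq A
  rw [← hE A, ← hvol A] at h
  rw [hnum]
  nlinarith [h]
end

section
/- Let G⁻ be the graph obtained from K_{1,3,3} by deleting one edge uv between the two partite sets of size 3, and let A = {u, w} where w ≠ v lies in the same partite set as v. Then q_{(A,V∖A)}(G⁻) = 1/56 > 0; hence δ⁻(K_{1,3,3}) = 1. -/
open Finset
open scoped Classical

/-! ### auxiliary lemmas -/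

lemma toFinset_irrel {α : Type*} (s : Set α) (i j : Fintype s) :
    @Set.toFinset α s i = @Set.toFinset α s j := by
  cases Subsingleton.elim i j; rfl

lemma filter_irrel {α : Type*} (p : α → Prop) (i j : DecidablePred p) (s : Finset α) :
    @Finset.filter α p i s = @Finset.filter α p j s := by
  cases Subsingleton.elim i j; rfl

lemma compl_irrel {V : Type*} [Fintype V] (i j : DecidableEq V) (A : Finset V) :
    @Compl.compl (Finset V) (@BooleanAlgebra.toCompl _ (@Finset.booleanAlgebra V _ i)) A =
      @Compl.compl (Finset V) (@BooleanAlgebra.toCompl _ (@Finset.booleanAlgebra V _ j)) A := by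
  cases Subsingleton.elim i j; rfl

lemma numEdges_eq {V : Type*} [Fintype V] [DecidableEq V] (G : SimpleGraph V)
    [DecidableRel G.Adj] : numEdges G = G.edgeFinset.card := by
  unfold numEdges SimpleGraph.edgeFinset
  rw [toFinset_irrel G.edgeSet _ inferInstance]

lemma vol_eq {V : Type*} [Fintype V] [DecidableEq V] (G : SimpleGraph V) [DecidableRel G.Adj]
    (U : Finset V) : vol G U = ∑ v ∈ U, G.degree v := by
  unfold vol
  refine Finset.sum_congr rfl fun x _ => ?_
  unfold SimpleGraph.degree SimpleGraph.neighborFinset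
  rw [toFinset_irrel (G.neighborSet x) _ inferInstance]

lemma edgesIn_eq {V : Type*} [Fintype V] [DecidableEq V] (G : SimpleGraph V) [DecidableRel G.Adj]
    (U : Finset V) :
    edgesIn G U = (G.edgeFinset.filter (fun e => ∀ v ∈ e, v ∈ U)).card := by
  unfold edgesIn SimpleGraph.edgeFinset
  rw [toFinset_irrel G.edgeSet _ inferInstance, filter_irrel _ _ inferInstance]

/-- `K_{1,3,3}` minus the edge `uv`, as a concrete decidable graph. -/
def Kdel (u v : Fin 7) : SimpleGraph (Fin 7) where
  Adj x y := part133 x ≠ part133 y ∧ s(x, y) ≠ s(u, v)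
  symm := by
    constructor
    intro x y ⟨h1, h2⟩
    exact ⟨h1.symm, by rwa [Sym2.eq_swap]⟩
  loopless := by constructor; intro x hx; exact hx.1 rfl

instance (u v : Fin 7) : DecidableRel (Kdel u v).Adj :=
  fun x y => inferInstanceAs (Decidable (_ ∧ _))

lemma bip_compute (H : SimpleGraph (Fin 7)) [DecidableRel H.Adj] (A : Finset (Fin 7))
    (h1 : edgesIn H A = 1)
    (h2 : edgesIn H Aᶜ = 8)
    (h3 : numEdges H = 14)
    (h4 : vol H A = 7)
    (h5 : vol H Aᶜ = 21) :
    bipScore H A = 1 / 56 := by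
  unfold bipScore
  rw [compl_irrel _ inferInstance A, h1, h2, h3, h4, h5]
  norm_num

instance {V : Type*} [Fintype V] : Finite (Finpartition (univ : Finset V)) :=
  Finite.of_injective Finpartition.parts fun a b h => by
    cases a; cases b; simpa using h

/-- the two-part partition `{A, B}`. -/
noncomputable def pairPartition {V : Type*} [Fintype V] (A B : Finset V)
    (h1 : A.Nonempty) (h2 : B.Nonempty) (hd : Disjoint A B) (hu : A ∪ B = univ) :
    Finpartition (univ : Finset V) where
  parts := {A, B}
  supIndep := by
    have hne : A ≠ B := by
      rintro rfl
      rw [disjoint_self] at hd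
      exact h1.ne_empty (by simpa using hd)
    rw [Finset.supIndep_pair hne]
    exact hd
  sup_parts := by
    rw [Finset.sup_insert, Finset.sup_singleton, id]
    simpa using hu
  bot_notMem := by
    simp only [Finset.bot_eq_empty, Finset.mem_insert, Finset.mem_singleton]
    rintro (h | h)
    · exact h1.ne_empty h.symm
    · exact h2.ne_empty h.symm

lemma modScore_pair {V : Type*} [Fintype V] (H : SimpleGraph V) (A B : Finset V)
    (h1 : A.Nonempty) (h2 : B.Nonempty) (hd : Disjoint A B) (hu : A ∪ B = univ)
    (hne : A ≠ B) (hB : ∀ x, x ∈ B ↔ x ∉ A) :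
    modScore H (pairPartition A B h1 h2 hd hu) = bipScore H A := by
  have hAc : Aᶜ = B := by
    ext x
    simp only [Finset.mem_compl]
    exact (hB x).symm
  unfold modScore bipScore pairPartition
  dsimp only
  rw [Finset.sum_pair hne, Finset.sum_pair hne, hAc]

theorem stmt16 (G : SimpleGraph (Fin 7))
    (hG : ∀ x y, G.Adj x y ↔ part133 x ≠ part133 y)
    (u v w : Fin 7) (hu : part133 u = 1) (hv : part133 v = 2) (hw : part133 w = 2)
    (hwv : w ≠ v) :
    bipScore (G.deleteEdges {s(u, v)}) {u, w} = 1 / 56 ∧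
      0 < modularity (G.deleteEdges {s(u, v)}) := by
  have hK : G.deleteEdges {s(u, v)} = Kdel u v := by
    ext x y
    simp only [SimpleGraph.deleteEdges_adj, hG, Set.mem_singleton_iff, Kdel]
  rw [hK]
  have hbip : bipScore (Kdel u v) {u, w} = 1 / 56 := by
    clear hK hG G
    fin_cases u <;> fin_cases v <;> fin_cases w <;>
      first
        | exact absurd hu (by decide)
        | exact absurd hv (by decide)
        | exact absurd hw (by decide)
        | exact absurd rfl hwv
        | exact bip_compute _ _ (by rw [edgesIn_eq]; decide) (by rw [edgesIn_eq]; decide)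
            (by rw [numEdges_eq]; decide) (by rw [vol_eq]; decide) (by rw [vol_eq]; decide)
  refine ⟨hbip, ?_⟩
  set A : Finset (Fin 7) := {u, w} with hA
  set B : Finset (Fin 7) := Finset.univ.filter (fun x => x ∉ A) with hB
  have hA1 : A.Nonempty := ⟨u, by simp [hA]⟩
  have hmemB : ∀ x, x ∈ B ↔ x ∉ A := by intro x; simp [hB]
  have huw : u ≠ w := by
    intro h
    rw [h, hw] at hu
    exact absurd hu (by decide)
  have hA2 : B.Nonempty := by
    by_contra hB2
    rw [Finset.not_nonempty_iff_eq_empty] at hB2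
    have hall : ∀ x : Fin 7, x ∈ A := by
      intro x
      by_contra hx
      have : x ∈ B := (hmemB x).2 hx
      simp [hB2] at this
    have : (univ : Finset (Fin 7)).card ≤ A.card :=
      Finset.card_le_card fun x _ => hall x
    have hcard : A.card ≤ 2 := (Finset.card_insert_le _ _).trans (by simp)
    simp only [Finset.card_univ, Fintype.card_fin] at this
    omega
  have key : modScore (Kdel u v)
      (pairPartition A B hA1 hA2
        (by rw [Finset.disjoint_left]; intro a ha hb; exact (hmemB a).1 hb ha)
        (by
          ext x
          simp only [Finset.mem_union, Finset.mem_univ, iff_true]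
          rcases em (x ∈ A) with hx | hx
          · exact Or.inl hx
          · exact Or.inr ((hmemB x).2 hx))) ≤ modularity (Kdel u v) :=
    le_ciSup (Set.Finite.bddAbove (Set.finite_range _)) _
  have hne : A ≠ B := by
    intro h
    have hu' : u ∈ A := by simp [hA]
    exact (hmemB u).1 (h ▸ hu') hu'
  rw [modScore_pair _ _ _ _ _ _ _ hne hmemB, hbip] at key
  linarith
end

section
/- Let G = K_{s_1,…,s_k} be a complete multipartite graph (k ≥ 2) and suppose ℓ ≥ 2 divides every s_i. Let A consist of s_i/ℓ vertices from each part S_i, and let A = {A, V∖A}. Then q_A(G) = 0 (and e_G(A, V∖A) ≥ 1). Consequently δ⁻(G) = 1. -/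
open Finset
open scoped Classical

lemma two_mul_edgesIn_s17 {V : Type*} [Fintype V] (G : SimpleGraph V) (A : Finset V) :
    ∑ v ∈ A, (A.filter (G.Adj v)).card = 2 * edgesIn G A := by
  classical
  set H : SimpleGraph V :=
    { Adj := fun x y => G.Adj x y ∧ x ∈ A ∧ y ∈ A
      symm := ⟨by rintro x y ⟨h, hx, hy⟩; exact ⟨h.symm, hy, hx⟩⟩
      loopless := ⟨by rintro x ⟨h, _⟩; exact G.irrefl h⟩ } with hH
  have hadj : ∀ x y, H.Adj x y ↔ G.Adj x y ∧ x ∈ A ∧ y ∈ A := fun x y => Iff.rfl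
  have hE : edgesIn G A = H.edgeFinset.card := by
    unfold edgesIn
    congr 1
    ext e
    induction e with
    | h x y =>
      simp only [mem_filter, SimpleGraph.mem_edgeFinset, SimpleGraph.mem_edgeSet, hadj,
        Sym2.mem_iff]
      constructor
      · rintro ⟨h, hall⟩
        exact ⟨h, hall x (Or.inl rfl), hall y (Or.inr rfl)⟩
      · rintro ⟨h, hx, hy⟩
        refine ⟨h, ?_⟩
        rintro v (rfl | rfl) <;> assumption
  have hdeg : ∀ v, H.degree v = if v ∈ A then (A.filter (G.Adj v)).card else 0 := by
    intro v
    rw [← SimpleGraph.card_neighborFinset_eq_degree]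
    by_cases hv : v ∈ A
    · simp only [hv, if_true]
      congr 1
      ext w
      simp [SimpleGraph.mem_neighborFinset, hadj, hv, and_comm]
    · simp only [hv, if_false]
      rw [Finset.card_eq_zero]
      ext w
      simp [SimpleGraph.mem_neighborFinset, hadj, hv]
  have h2 := H.sum_degrees_eq_twice_card_edges
  rw [← hE] at h2
  rw [← h2]
  rw [← Finset.sum_subset (Finset.subset_univ A)]
  · exact Finset.sum_congr rfl fun v hv => by rw [hdeg, if_pos hv]
  · intro v _ hv
    rw [hdeg, if_neg hv]

instance finpartition_finite {V : Type*} [Fintype V] :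
    Finite (Finpartition (univ : Finset V)) := by
  classical
  exact Finite.of_injective (fun P => P.parts) (fun P Q h => Finpartition.ext h)


lemma bipScore_zero_of {V : Type*} [Fintype V] (G : SimpleGraph V) (A B : Finset V)
    (hB : B = Aᶜ) (L : ℝ) (hL : 2 ≤ L) (hM : (4:ℝ) ≤ (numEdges G : ℝ))
    (rEA : L^2 * (edgesIn G A : ℝ) = (numEdges G : ℝ))
    (rEB : L^2 * (edgesIn G B : ℝ) = (L-1)^2 * (numEdges G : ℝ))
    (rVA : L * (vol G A : ℝ) = 2 * (numEdges G : ℝ))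
    (rVB : L * (vol G B : ℝ) = 2*L*(numEdges G : ℝ) - 2*(numEdges G : ℝ)) :
    bipScore G A = 0 := by
  subst hB
  unfold bipScore
  rw [sub_eq_zero, div_eq_div_iff ((by nlinarith : (0:ℝ) < (numEdges G : ℝ)).ne')
    ((by nlinarith : (0:ℝ) < 4 * (numEdges G : ℝ)^2).ne')]
  have hL2ne : (L:ℝ)^2 ≠ 0 := by nlinarith
  apply mul_left_cancel₀ hL2ne
  linear_combination (4*(numEdges G:ℝ)^2) * rEA + (4*(numEdges G:ℝ)^2) * rEB
    - (numEdges G:ℝ) * (L * (vol G A : ℝ) + 2*(numEdges G:ℝ)) * rVA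
    - (numEdges G:ℝ) * (L * (vol G Aᶜ : ℝ) + 2*L*(numEdges G:ℝ) - 2*(numEdges G:ℝ)) * rVB

lemma modularity_pos_of {V : Type*} [Fintype V] (G' : SimpleGraph V) (A B : Finset V)
    (hB : B = Aᶜ) (hAne : A.Nonempty) (hBne : B.Nonempty)
    (L M : ℝ) (hL : 2 ≤ L) (hM4 : 4 ≤ M)
    (hEAR : L^2 * (edgesIn G' A : ℝ) = M)
    (hEBR : L^2 * (edgesIn G' B : ℝ) = (L-1)^2 * M)
    (hVAR : L * ((vol G' A : ℝ) + 1) = 2 * M)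
    (hVBR : L * ((vol G' B : ℝ) + 1) = 2*L*M - 2*M)
    (hMR : (numEdges G' : ℝ) = M - 1)
    (rM : L^2 ≤ M) :
    0 < modularity G' := by
  subst hB
  obtain ⟨x0, hx0⟩ := hAne
  obtain ⟨y, hy⟩ := hBne
  have hAne' : A ≠ Aᶜ := fun h => Finset.mem_compl.mp (h ▸ hx0) hx0
  have hAnotbot : (⊥ : Finset V) ∉ ({A, Aᶜ} : Finset (Finset V)) := by
    simp only [Finset.mem_insert, Finset.mem_singleton, Finset.bot_eq_empty]
    push_neg
    constructor
    · intro h; exact absurd (h ▸ hx0) (Finset.notMem_empty x0)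
    · intro h; exact absurd (h ▸ hy) (Finset.notMem_empty y)
  set P : Finpartition (univ : Finset V) :=
    ⟨{A, Aᶜ}, (Finset.supIndep_pair hAne').mpr disjoint_compl_right,
      by rw [Finset.sup_insert, Finset.sup_singleton, id, id, ← Finset.union_compl A]; rfl,
      hAnotbot⟩ with hP
  have hparts : P.parts = {A, Aᶜ} := rfl
  have hscore : modScore G' P
      = ((edgesIn G' A : ℝ) + (edgesIn G' Aᶜ : ℝ)) / (numEdges G' : ℝ)
      - ((vol G' A : ℝ)^2 + (vol G' Aᶜ : ℝ)^2) / (4 * (numEdges G' : ℝ)^2) := by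
    unfold modScore
    rw [hparts, Finset.sum_pair hAne', Finset.sum_pair hAne']
  have hpos : 0 < modScore G' P := by
    rw [hscore, hMR, sub_pos, div_lt_div_iff₀ (by nlinarith) (by nlinarith)]
    have hL2pos : (0:ℝ) < L^2 := by nlinarith
    have hkey : L^2 * (((edgesIn G' A : ℝ) + (edgesIn G' Aᶜ : ℝ)) * (4 * (M-1)^2)
          - ((vol G' A : ℝ)^2 + (vol G' Aᶜ : ℝ)^2) * (M-1))
        = (M - 1) * (8*M*(L-1) - 2*L^2) := by
      linear_combination (4*(M-1)^2) * hEAR + (4*(M-1)^2) * hEBR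
        - (M-1) * (L * (vol G' A : ℝ) + 2*M - L) * hVAR
        - (M-1) * (L * (vol G' Aᶜ : ℝ) + 2*L*M - 2*M - L) * hVBR
    have hR : 0 < (M - 1) * (8*M*(L-1) - 2*L^2) := by nlinarith [rM, hL, hM4]
    nlinarith [hkey, hR, hL2pos]
  have hbdd : BddAbove (Set.range (modScore G')) :=
    Set.Finite.bddAbove (Set.finite_range _)
  calc (0:ℝ) < modScore G' P := hpos
    _ ≤ modularity G' := le_ciSup hbdd P

set_option maxHeartbeats 2000000 in
theorem stmt17 (k ℓ : ℕ) (hk : 2 ≤ k) (hl : 2 ≤ ℓ) (s : Fin k → ℕ)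
    (hs : ∀ i, 1 ≤ s i) (hdvd : ∀ i, ℓ ∣ s i)
    (G : SimpleGraph ((i : Fin k) × Fin (s i)))
    (hG : ∀ x y, G.Adj x y ↔ x.1 ≠ y.1)
    (A : Finset ((i : Fin k) × Fin (s i)))
    (hA : ∀ i, (A.filter (fun x => x.1 = i)).card = s i / ℓ) :
    bipScore G A = 0 ∧ 1 ≤ edgesBetween G A Aᶜ ∧
      ∃ x y, G.Adj x y ∧ 0 < modularity (G.deleteEdges {s(x, y)}) := by
  have hl0 : 0 < ℓ := by omega
  set t := ∑ i, s i with ht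
  set m := numEdges G with hm
  -- ====== basic counting infrastructure ======
  have hpart : ∀ i : Fin k,
      ((univ : Finset ((i : Fin k) × Fin (s i))).filter (fun x => x.1 = i)).card = s i := by
    intro i
    have : ((univ : Finset ((i : Fin k) × Fin (s i))).filter (fun x => x.1 = i)) =
        (univ : Finset (Fin (s i))).map ⟨fun a => ⟨i, a⟩, fun a b h => by
          simpa [Sigma.mk.inj_iff] using h⟩ := by
      ext ⟨j, a⟩
      simp only [mem_filter, mem_univ, true_and, mem_map, Function.Embedding.coeFn_mk]
      constructor
      · rintro rfl; exact ⟨a, rfl⟩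
      · rintro ⟨b, hb⟩; cases hb; rfl
    rw [this, Finset.card_map, Finset.card_univ, Fintype.card_fin]
  have hcardV : (univ : Finset ((i : Fin k) × Fin (s i))).card = t := by
    rw [Finset.card_univ, Fintype.card_sigma]
    simp [ht]
  have hgrp : ∀ (B : Finset ((i : Fin k) × Fin (s i))) (f : Fin k → ℕ),
      ∑ v ∈ B, f v.1 = ∑ i, (B.filter (fun x => x.1 = i)).card * f i := by
    intro B f
    rw [← Finset.sum_fiberwise B (fun v => v.1) (fun v => f v.1)]
    refine Finset.sum_congr rfl fun i _ => ?_
    calc ∑ v ∈ B.filter (fun v => v.1 = i), f v.1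
        = ∑ v ∈ B.filter (fun v => v.1 = i), f i :=
          Finset.sum_congr rfl fun v hv => by rw [(Finset.mem_filter.mp hv).2]
      _ = _ := by rw [Finset.sum_const, smul_eq_mul]
  have hdeg : ∀ v : (i : Fin k) × Fin (s i), G.degree v + s v.1 = t := by
    intro v
    rw [← SimpleGraph.card_neighborFinset_eq_degree, SimpleGraph.neighborFinset_eq_filter]
    have hneg : ((univ : Finset ((i : Fin k) × Fin (s i))).filter (fun y => ¬ G.Adj v y)) =
        ((univ : Finset ((i : Fin k) × Fin (s i))).filter (fun x => x.1 = v.1)) := by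
      ext y
      simp only [mem_filter, mem_univ, true_and, hG, ne_eq, not_not]
      exact eq_comm
    calc (Finset.filter (fun y => G.Adj v y) univ).card + s v.1
        = (Finset.filter (fun y => G.Adj v y) univ).card
          + ((univ : Finset ((i : Fin k) × Fin (s i))).filter (fun y => ¬ G.Adj v y)).card := by
            rw [hneg, hpart]
      _ = (univ : Finset ((i : Fin k) × Fin (s i))).card :=
            Finset.card_filter_add_card_filter_not _
      _ = t := hcardV
  -- ====== ℕ-level identities ======
  have hla : ∀ i, ℓ * (s i / ℓ) = s i := fun i => Nat.mul_div_cancel' (hdvd i)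
  have hab : ∀ i, (A.filter (fun x => x.1 = i)).card + (Aᶜ.filter (fun x => x.1 = i)).card
      = s i := by
    intro i
    rw [← hpart i, ← Finset.card_union_of_disjoint
      (Finset.disjoint_filter_filter disjoint_compl_right), ← Finset.filter_union,
      Finset.union_compl]
  have hcb : ∀ i, ℓ * (Aᶜ.filter (fun x => x.1 = i)).card + s i = ℓ * s i := by
    intro i
    have h1 := congrArg (fun n => ℓ * n) (hab i)
    simp only [Nat.mul_add] at h1
    rw [hA i, hla i] at h1
    omega
  have hcard : ∀ B : Finset ((i : Fin k) × Fin (s i)),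
      B.card = ∑ i, (B.filter (fun x => x.1 = i)).card := by
    intro B
    have := hgrp B (fun _ => 1)
    simpa using this
  have hhs : ∑ v, G.degree v = 2 * m := by
    rw [hm]; exact G.sum_degrees_eq_twice_card_edges
  have hvol_univ : 2 * m + ∑ i, s i * s i = t * t := by
    have h1 : ∑ v, (G.degree v + s v.1) = (univ : Finset ((i : Fin k) × Fin (s i))).card * t := by
      rw [Finset.sum_congr rfl (fun v _ => hdeg v), Finset.sum_const, smul_eq_mul]
    rw [Finset.sum_add_distrib, hhs, hgrp univ s, hcardV] at h1
    rw [← h1]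
    congr 1
    exact Finset.sum_congr rfl fun i _ => by rw [hpart i]
  have hvolA : vol G A + ∑ i, (s i / ℓ) * s i = A.card * t := by
    have h1 : ∑ v ∈ A, (G.degree v + s v.1) = A.card * t := by
      rw [Finset.sum_congr rfl (fun v _ => hdeg v), Finset.sum_const, smul_eq_mul]
    rw [Finset.sum_add_distrib, hgrp A s] at h1
    have h1' : ∑ i, (A.filter (fun x => x.1 = i)).card * s i = ∑ i, (s i / ℓ) * s i :=
      Finset.sum_congr rfl fun i _ => by rw [hA i]
    rw [h1'] at h1
    unfold vol
    exact h1
  have hvolAB : vol G A + vol G Aᶜ = 2 * m := by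
    rw [vol, vol, Finset.sum_add_sum_compl, hhs]
  have hedges : ∀ B : Finset ((i : Fin k) × Fin (s i)),
      2 * edgesIn G B + ∑ i, (B.filter (fun x => x.1 = i)).card * (B.filter (fun x => x.1 = i)).card
        = B.card * B.card := by
    intro B
    have key : ∀ v ∈ B, (B.filter (G.Adj v)).card + (B.filter (fun x => x.1 = v.1)).card
        = B.card := by
      intro v _
      have hneg : B.filter (fun y => ¬ G.Adj v y) = B.filter (fun x => x.1 = v.1) := by
        ext y
        simp only [mem_filter, hG, ne_eq, not_not]
        constructor
        · rintro ⟨h1, h2⟩; exact ⟨h1, h2.symm⟩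
        · rintro ⟨h1, h2⟩; exact ⟨h1, h2.symm⟩
      rw [← hneg]
      exact Finset.card_filter_add_card_filter_not _
    have h1 : ∑ v ∈ B, ((B.filter (G.Adj v)).card + (B.filter (fun x => x.1 = v.1)).card)
        = B.card * B.card := by
      rw [Finset.sum_congr rfl key, Finset.sum_const, smul_eq_mul]
    rw [Finset.sum_add_distrib, two_mul_edgesIn_s17,
      hgrp B (fun i => (B.filter (fun x => x.1 = i)).card)] at h1
    exact h1
  -- ====== reference vertices ======
  have ha1 : ∀ i, 1 ≤ s i / ℓ := by
    intro i
    rcases Nat.eq_zero_or_pos (s i / ℓ) with h | h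
    · exfalso; have h2 := hla i; rw [h, Nat.mul_zero] at h2; have := hs i; omega
    · exact h
  have hb1 : ∀ i, 1 ≤ (Aᶜ.filter (fun x => x.1 = i)).card := by
    intro i
    have h1 := hcb i
    have h2 := hs i
    rcases Nat.eq_zero_or_pos (Aᶜ.filter (fun x => x.1 = i)).card with h | h
    · exfalso; rw [h, Nat.mul_zero] at h1; nlinarith
    · exact h
  set i0 : Fin k := ⟨0, by omega⟩ with hi0
  set i1 : Fin k := ⟨1, by omega⟩ with hi1
  have hi01 : i0 ≠ i1 := by
    intro h; rw [hi0, hi1, Fin.mk.injEq] at h; omega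
  obtain ⟨x0, hx0⟩ : (A.filter (fun x => x.1 = i0)).Nonempty := by
    rw [← Finset.card_pos, hA]; exact ha1 i0
  obtain ⟨x1, hx1⟩ : (A.filter (fun x => x.1 = i1)).Nonempty := by
    rw [← Finset.card_pos, hA]; exact ha1 i1
  obtain ⟨y, hy⟩ : (Aᶜ.filter (fun x => x.1 = i1)).Nonempty := by
    rw [← Finset.card_pos]; exact hb1 i1
  rw [Finset.mem_filter] at hx0 hx1 hy
  have hyA : y ∉ A := Finset.mem_compl.mp hy.1
  have hx0c : x0 ∉ Aᶜ := by rw [Finset.mem_compl, not_not]; exact hx0.1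
  have hadj01 : G.Adj x0 x1 := by rw [hG, hx0.2, hx1.2]; exact hi01
  have hadj0y : G.Adj x0 y := by rw [hG, hx0.2, hy.2]; exact hi01
  have hxy : x0 ≠ y := fun h => hyA (h ▸ hx0.1)
  have heA1 : 1 ≤ edgesIn G A := by
    unfold edgesIn
    refine Finset.card_pos.mpr ⟨s(x0, x1), ?_⟩
    simp only [Finset.mem_filter, SimpleGraph.mem_edgeFinset, SimpleGraph.mem_edgeSet]
    refine ⟨hadj01, ?_⟩
    intro v hv
    rw [Sym2.mem_iff] at hv
    rcases hv with rfl | rfl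
    · exact hx0.1
    · exact hx1.1
  have hbet : 1 ≤ edgesBetween G A Aᶜ := by
    unfold edgesBetween
    refine Finset.card_pos.mpr ⟨s(x0, y), ?_⟩
    simp only [Finset.mem_filter, SimpleGraph.mem_edgeFinset, SimpleGraph.mem_edgeSet]
    exact ⟨hadj0y, x0, hx0.1, y, hy.1, rfl⟩
  -- ====== real-level identities ======
  have castA : ∀ i, (((A.filter (fun x => x.1 = i)).card : ℕ) : ℝ) = ((s i / ℓ : ℕ) : ℝ) :=
    fun i => by exact_mod_cast hA i
  have hLpos : (0:ℝ) < (ℓ:ℝ) := by exact_mod_cast hl0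
  have hL2 : (2:ℝ) ≤ (ℓ:ℝ) := by exact_mod_cast hl
  have hurR : ∀ i, (ℓ:ℝ) * ((s i / ℓ : ℕ):ℝ) = (s i:ℝ) := fun i => by exact_mod_cast hla i
  have hcrR : ∀ i, (ℓ:ℝ) * (((Aᶜ.filter (fun x => x.1 = i)).card : ℕ) : ℝ) + (s i:ℝ)
      = (ℓ:ℝ) * (s i:ℝ) := fun i => by exact_mod_cast hcb i
  have htR : (t:ℝ) = ∑ i, (s i:ℝ) := by rw [ht]; push_cast; rfl
  have hSS : 2 * (m:ℝ) + ∑ i, (s i:ℝ) * (s i:ℝ) = (t:ℝ) * (t:ℝ) := by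
    exact_mod_cast hvol_univ
  have hCA : ((A.card : ℕ):ℝ) = ∑ i, ((s i / ℓ : ℕ):ℝ) := by
    have h2 : ((A.card : ℕ):ℝ) = ∑ i, (((A.filter (fun x => x.1 = i)).card : ℕ) : ℝ) := by
      exact_mod_cast hcard A
    rw [h2]
    exact Finset.sum_congr rfl fun i _ => castA i
  have hCAr : (ℓ:ℝ) * ((A.card : ℕ):ℝ) = (t:ℝ) := by
    rw [hCA, Finset.mul_sum, htR]
    exact Finset.sum_congr rfl fun i _ => hurR i
  have hCBr : (ℓ:ℝ) * ((Aᶜ.card : ℕ):ℝ) + (t:ℝ) = (ℓ:ℝ) * (t:ℝ) := by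
    have h2 : ((Aᶜ.card : ℕ):ℝ) = ∑ i, (((Aᶜ.filter (fun x => x.1 = i)).card : ℕ) : ℝ) := by
      exact_mod_cast hcard Aᶜ
    rw [h2, Finset.mul_sum, htR, ← Finset.sum_add_distrib,
      Finset.sum_congr rfl (fun i (_ : i ∈ univ) => hcrR i), ← Finset.mul_sum]
  -- edges inside A
  have hedgesA : 2 * ((edgesIn G A : ℕ):ℝ) + ∑ i, ((s i / ℓ : ℕ):ℝ) * ((s i / ℓ : ℕ):ℝ)
      = ((A.card : ℕ):ℝ) * ((A.card : ℕ):ℝ) := by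
    have h2 : 2 * ((edgesIn G A : ℕ):ℝ)
        + ∑ i, (((A.filter (fun x => x.1 = i)).card : ℕ) : ℝ)
          * (((A.filter (fun x => x.1 = i)).card : ℕ) : ℝ)
        = ((A.card : ℕ):ℝ) * ((A.card : ℕ):ℝ) := by exact_mod_cast hedges A
    rw [← h2]
    congr 1
    exact Finset.sum_congr rfl fun i _ => by rw [castA i]
  have hedgesB : 2 * ((edgesIn G Aᶜ : ℕ):ℝ)
      + ∑ i, (((Aᶜ.filter (fun x => x.1 = i)).card : ℕ) : ℝ)
        * (((Aᶜ.filter (fun x => x.1 = i)).card : ℕ) : ℝ)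
      = ((Aᶜ.card : ℕ):ℝ) * ((Aᶜ.card : ℕ):ℝ) := by exact_mod_cast hedges Aᶜ
  have hs2 : (ℓ:ℝ)^2 * ∑ i, ((s i / ℓ : ℕ):ℝ) * ((s i / ℓ : ℕ):ℝ)
      = ∑ i, (s i:ℝ) * (s i:ℝ) := by
    rw [Finset.mul_sum]
    exact Finset.sum_congr rfl fun i _ => by
      linear_combination ((ℓ:ℝ) * ((s i / ℓ : ℕ):ℝ) + (s i:ℝ)) * hurR i
  have hsB2 : (ℓ:ℝ)^2 * ∑ i, (((Aᶜ.filter (fun x => x.1 = i)).card : ℕ) : ℝ)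
        * (((Aᶜ.filter (fun x => x.1 = i)).card : ℕ) : ℝ)
      = ((ℓ:ℝ) - 1)^2 * ∑ i, (s i:ℝ) * (s i:ℝ) := by
    rw [Finset.mul_sum, Finset.mul_sum]
    exact Finset.sum_congr rfl fun i _ => by
      linear_combination ((ℓ:ℝ) * (((Aᶜ.filter (fun x => x.1 = i)).card : ℕ) : ℝ)
        + (ℓ:ℝ) * (s i:ℝ) - (s i:ℝ)) * hcrR i
  have rEA : (ℓ:ℝ)^2 * ((edgesIn G A : ℕ):ℝ) = (m:ℝ) := by
    have hca2 : ((ℓ:ℝ) * ((A.card:ℕ):ℝ)) * ((ℓ:ℝ) * ((A.card:ℕ):ℝ)) = (t:ℝ) * (t:ℝ) := by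
      rw [hCAr]
    linear_combination ((ℓ:ℝ)^2/2) * hedgesA - (1/2) * hs2 + (1/2) * hca2 - (1/2) * hSS
  have rEB : (ℓ:ℝ)^2 * ((edgesIn G Aᶜ : ℕ):ℝ) = ((ℓ:ℝ) - 1)^2 * (m:ℝ) := by
    have hcb2 : ((ℓ:ℝ) * ((Aᶜ.card:ℕ):ℝ)) * ((ℓ:ℝ) * ((Aᶜ.card:ℕ):ℝ))
        = ((ℓ:ℝ) * (t:ℝ) - (t:ℝ)) * ((ℓ:ℝ) * (t:ℝ) - (t:ℝ)) := by
      linear_combination ((ℓ:ℝ) * ((Aᶜ.card:ℕ):ℝ) + (ℓ:ℝ) * (t:ℝ) - (t:ℝ)) * hCBr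
    linear_combination ((ℓ:ℝ)^2/2) * hedgesB - (1/2) * hsB2 + (1/2) * hcb2
      - (((ℓ:ℝ)-1)^2/2) * hSS
  have hvolAR : ((vol G A : ℕ):ℝ) + ∑ i, ((s i / ℓ : ℕ):ℝ) * (s i:ℝ)
      = ((A.card : ℕ):ℝ) * (t:ℝ) := by exact_mod_cast hvolA
  have hus : (ℓ:ℝ) * ∑ i, ((s i / ℓ : ℕ):ℝ) * (s i:ℝ) = ∑ i, (s i:ℝ) * (s i:ℝ) := by
    rw [Finset.mul_sum]
    exact Finset.sum_congr rfl fun i _ => by linear_combination (s i:ℝ) * hurR i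
  have rVA : (ℓ:ℝ) * ((vol G A : ℕ):ℝ) = 2 * (m:ℝ) := by
    linear_combination (ℓ:ℝ) * hvolAR - hus + (t:ℝ) * hCAr - hSS
  have hvolABR : ((vol G A : ℕ):ℝ) + ((vol G Aᶜ : ℕ):ℝ) = 2 * (m:ℝ) := by
    exact_mod_cast hvolAB
  have rVB : (ℓ:ℝ) * ((vol G Aᶜ : ℕ):ℝ) = 2 * (ℓ:ℝ) * (m:ℝ) - 2 * (m:ℝ) := by
    linear_combination (ℓ:ℝ) * hvolABR - rVA
  have rM : (ℓ:ℝ)^2 ≤ (m:ℝ) := by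
    have h1 : (1:ℝ) ≤ ((edgesIn G A : ℕ):ℝ) := by exact_mod_cast heA1
    nlinarith [rEA, h1, hLpos]
  have hM4 : (4:ℝ) ≤ (m:ℝ) := by nlinarith [rM, hL2]
  have hMpos : (0:ℝ) < (m:ℝ) := by linarith
  -- ====== bipScore = 0 ======
  have hcompl : ∀ B : Finset ((i : Fin k) × Fin (s i)), (∀ v, v ∈ B ↔ v ∉ A) → True :=
    fun _ _ => trivial
  have hbip : bipScore G A = 0 := by
    refine bipScore_zero_of G A Aᶜ ?_ (ℓ:ℝ) hL2 hM4 rEA rEB rVA rVB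
    ext v
    simp [Finset.mem_compl]
  refine ⟨hbip, hbet, x0, y, hadj0y, ?_⟩
  -- ====== the deleted-edge graph ======
  set G' := G.deleteEdges {s(x0, y)} with hG'
  have hmemE : s(x0, y) ∈ G.edgeFinset := SimpleGraph.mem_edgeFinset.mpr hadj0y
  have hEF : G'.edgeFinset = G.edgeFinset.erase s(x0, y) := by
    ext e
    rw [SimpleGraph.mem_edgeFinset, hG', SimpleGraph.edgeSet_deleteEdges, Set.mem_diff,
      Set.mem_singleton_iff, Finset.mem_erase, SimpleGraph.mem_edgeFinset]
    exact and_comm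
  have hEF' : ∀ inst : Fintype G'.edgeSet,
      @SimpleGraph.edgeFinset _ G' inst = G.edgeFinset.erase s(x0, y) := fun _ => by convert hEF
  have hm' : numEdges G' + 1 = m := by
    have hc1 : 1 ≤ G.edgeFinset.card := Finset.card_pos.mpr ⟨_, hmemE⟩
    rw [hm]
    unfold numEdges
    rw [hEF' _, Finset.card_erase_of_mem hmemE]
    omega
  have heA' : edgesIn G' A = edgesIn G A := by
    unfold edgesIn
    rw [hEF' _, Finset.filter_erase, Finset.erase_eq_of_notMem]
    intro hmem
    simp only [Finset.mem_filter] at hmem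
    exact hyA (hmem.2 y (Sym2.mem_mk_right x0 y))
  have heB' : edgesIn G' Aᶜ = edgesIn G Aᶜ := by
    unfold edgesIn
    rw [hEF' _, Finset.filter_erase, Finset.erase_eq_of_notMem]
    intro hmem
    simp only [Finset.mem_filter] at hmem
    exact hx0c (hmem.2 x0 (Sym2.mem_mk_left x0 y))
  -- degrees in G'
  have hdeg_other : ∀ v, v ≠ x0 → v ≠ y → G'.degree v = G.degree v := by
    intro v hvx hvy
    rw [← SimpleGraph.card_neighborFinset_eq_degree, ← SimpleGraph.card_neighborFinset_eq_degree]
    congr 1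
    ext w
    simp only [SimpleGraph.mem_neighborFinset, hG', SimpleGraph.deleteEdges_adj,
      Set.mem_singleton_iff]
    constructor
    · rintro ⟨h, _⟩; exact h
    · intro h
      refine ⟨h, ?_⟩
      intro heq
      rw [Sym2.eq_iff] at heq
      rcases heq with ⟨rfl, rfl⟩ | ⟨rfl, rfl⟩
      · exact hvx rfl
      · exact hvy rfl
  have hdeg_x0 : G'.degree x0 + 1 = G.degree x0 := by
    rw [← SimpleGraph.card_neighborFinset_eq_degree, ← SimpleGraph.card_neighborFinset_eq_degree]
    have hnb : G'.neighborFinset x0 = (G.neighborFinset x0).erase y := by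
      ext w
      simp only [SimpleGraph.mem_neighborFinset, hG', SimpleGraph.deleteEdges_adj,
        Set.mem_singleton_iff, Finset.mem_erase]
      constructor
      · rintro ⟨h1, h2⟩
        refine ⟨fun hwy => h2 ?_, h1⟩
        rw [hwy]
      · rintro ⟨h1, h2⟩
        refine ⟨h2, fun heq => ?_⟩
        rw [Sym2.eq_iff] at heq
        rcases heq with ⟨_, rfl⟩ | ⟨h3, rfl⟩
        · exact h1 rfl
        · exact hxy h3
    rw [hnb, Finset.card_erase_of_mem (SimpleGraph.mem_neighborFinset G x0 y |>.mpr hadj0y)]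
    have : 1 ≤ (G.neighborFinset x0).card :=
      Finset.card_pos.mpr ⟨y, (SimpleGraph.mem_neighborFinset G x0 y).mpr hadj0y⟩
    omega
  have hdeg_y : G'.degree y + 1 = G.degree y := by
    rw [← SimpleGraph.card_neighborFinset_eq_degree, ← SimpleGraph.card_neighborFinset_eq_degree]
    have hnb : G'.neighborFinset y = (G.neighborFinset y).erase x0 := by
      ext w
      simp only [SimpleGraph.mem_neighborFinset, hG', SimpleGraph.deleteEdges_adj,
        Set.mem_singleton_iff, Finset.mem_erase]
      constructor
      · rintro ⟨h1, h2⟩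
        refine ⟨fun hwy => h2 ?_, h1⟩
        rw [hwy, Sym2.eq_swap]
      · rintro ⟨h1, h2⟩
        refine ⟨h2, fun heq => ?_⟩
        rw [Sym2.eq_iff] at heq
        rcases heq with ⟨h3, rfl⟩ | ⟨_, rfl⟩
        · exact hxy h3.symm
        · exact h1 rfl
    rw [hnb, Finset.card_erase_of_mem
      ((SimpleGraph.mem_neighborFinset G y x0).mpr hadj0y.symm)]
    have : 1 ≤ (G.neighborFinset y).card :=
      Finset.card_pos.mpr ⟨x0, (SimpleGraph.mem_neighborFinset G y x0).mpr hadj0y.symm⟩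
    omega
  have hvolA' : vol G' A + 1 = vol G A := by
    rw [show vol G' A = ∑ v ∈ A, G'.degree v by unfold vol; congr!]
    unfold vol
    rw [← Finset.add_sum_erase A (fun v => G.degree v) hx0.1,
      ← Finset.add_sum_erase A (fun v => G'.degree v) hx0.1]
    have hsame : ∑ v ∈ A.erase x0, G'.degree v = ∑ v ∈ A.erase x0, G.degree v := by
      refine Finset.sum_congr rfl fun v hv => ?_
      have hv1 := Finset.mem_erase.mp hv
      exact hdeg_other v hv1.1 (fun h => hyA (h ▸ hv1.2))
    rw [hsame]
    omega
  have hvolB' : vol G' Aᶜ + 1 = vol G Aᶜ := by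
    rw [show vol G' Aᶜ = ∑ v ∈ Aᶜ, G'.degree v by unfold vol; congr!]
    unfold vol
    rw [← Finset.add_sum_erase Aᶜ (fun v => G.degree v) hy.1,
      ← Finset.add_sum_erase Aᶜ (fun v => G'.degree v) hy.1]
    have hsame : ∑ v ∈ Aᶜ.erase y, G'.degree v = ∑ v ∈ Aᶜ.erase y, G.degree v := by
      refine Finset.sum_congr rfl fun v hv => ?_
      have hv1 := Finset.mem_erase.mp hv
      exact hdeg_other v (fun h => hx0c (h ▸ hv1.2)) hv1.1
    rw [hsame]
    omega
  -- ====== apply the modularity lemma ======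
  have hMR : (numEdges G' : ℝ) = (m:ℝ) - 1 := by
    have h2 : ((numEdges G' : ℕ) : ℝ) + 1 = (m : ℝ) := by exact_mod_cast hm'
    linarith
  have hEAR : (ℓ:ℝ)^2 * ((edgesIn G' A : ℕ):ℝ) = (m:ℝ) := by rw [heA']; exact rEA
  have hEBR : (ℓ:ℝ)^2 * ((edgesIn G' Aᶜ : ℕ):ℝ) = ((ℓ:ℝ)-1)^2 * (m:ℝ) := by
    rw [heB']; exact rEB
  have hVAR : (ℓ:ℝ) * (((vol G' A : ℕ):ℝ) + 1) = 2 * (m:ℝ) := by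
    have h2 : ((vol G' A : ℕ):ℝ) + 1 = ((vol G A : ℕ):ℝ) := by exact_mod_cast hvolA'
    rw [h2]; exact rVA
  have hVBR : (ℓ:ℝ) * (((vol G' Aᶜ : ℕ):ℝ) + 1) = 2*(ℓ:ℝ)*(m:ℝ) - 2*(m:ℝ) := by
    have h2 : ((vol G' Aᶜ : ℕ):ℝ) + 1 = ((vol G Aᶜ : ℕ):ℝ) := by exact_mod_cast hvolB'
    rw [h2]; exact rVB
  exact modularity_pos_of G' A Aᶜ (by ext v; simp) ⟨x0, hx0.1⟩ ⟨y, hy.1⟩ (ℓ:ℝ) (m:ℝ)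
    hL2 hM4 hEAR hEBR hVAR hVBR hMR rM
end
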